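/- The maximum competitive price of seller j's item equals the marginal contribution of seller j to the optimal welfare: p̄_j = W(S, B, G) − W(S \ {j}, B, G), where W denotes the maximum-weight matching value among the given sellers and buyers subject to graph G. -/

import Mathlib

open Finset

/-- A matching between buyers `B` and sellers `S` along edges of the bipartite graph `g`:
a set of (buyer, seller) pairs using only allowed edges, with each buyer and each seller
appearing at most once. -/
def IsMatching (B S : Finset ℕ) (g : ℕ → ℕ → Prop) (M : Finset (ℕ × ℕ)) : Prop :=
  (∀ e ∈ M, e.1 ∈ B ∧ e.2 ∈ S ∧ g e.1 e.2) ∧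
  ∀ e ∈ M, ∀ e' ∈ M, e ≠ e' → e.1 ≠ e'.1 ∧ e.2 ≠ e'.2

/-- `W B S g v` is the maximum total weight of a matching between buyers `B` and sellers `S`
along edges of `g`, where the weight of edge (i, j) is `v i j`. -/
noncomputable def W (B S : Finset ℕ) (g : ℕ → ℕ → Prop) (v : ℕ → ℕ → ℝ) : ℝ :=
  sSup {x | ∃ M : Finset (ℕ × ℕ), IsMatching B S g M ∧ x = ∑ e ∈ M, v e.1 e.2}

/-- The utility of buyer `i` under prices `p` and allocation `a`: the value minus price of
the item allocated to `i` (zero if `i` receives nothing). -/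
noncomputable def util (v : ℕ → ℕ → ℝ) (p : ℕ → ℝ) (a : Finset (ℕ × ℕ)) (i : ℕ) : ℝ :=
  ∑ e ∈ a.filter (fun e => e.1 = i), (v e.1 e.2 - p e.2)

/-- Competitive equilibrium of the unit-demand buyer-seller market `(B, S, g, v)`:
the allocation is a matching along edges of `g`, prices are nonnegative, every buyer has
nonnegative utility and receives a most-preferred outcome among accessible items,
and unassigned goods have price zero. -/
noncomputable def IsCE (B S : Finset ℕ) (g : ℕ → ℕ → Prop) (v : ℕ → ℕ → ℝ)
    (p : ℕ → ℝ) (a : Finset (ℕ × ℕ)) : Prop :=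
  IsMatching B S g a ∧
  (∀ j, 0 ≤ p j) ∧
  (∀ i ∈ B, 0 ≤ util v p a i) ∧
  (∀ i ∈ B, ∀ j ∈ S, g i j → v i j - p j ≤ util v p a i) ∧
  (∀ j ∈ S, (∀ i, (i, j) ∉ a) → p j = 0)


namespace MCP

def inc (w : ℕ ⊕ ℕ) (e : ℕ × ℕ) : Prop :=
  Sum.elim (fun b => e.1 = b) (fun s => e.2 = s) w

instance (w : ℕ ⊕ ℕ) : DecidablePred (inc w) := by
  cases w with
  | inl b => exact fun e => Nat.decEq e.1 b
  | inr s => exact fun e => Nat.decEq e.2 s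

def mdeg (E : Multiset (ℕ × ℕ)) (w : ℕ ⊕ ℕ) : ℕ :=
  Multiset.card (E.filter (inc w))

def PM (X : Multiset (ℕ × ℕ)) : Prop := ∀ w, mdeg X w ≤ 1

lemma mdeg_le {X E : Multiset (ℕ × ℕ)} (h : X ≤ E) (w : ℕ ⊕ ℕ) :
    mdeg X w ≤ mdeg E w :=
  Multiset.card_le_card (Multiset.filter_le_filter _ h)

lemma mdeg_cons (e : ℕ × ℕ) (E : Multiset (ℕ × ℕ)) (w : ℕ ⊕ ℕ) :
    mdeg (e ::ₘ E) w = (if inc w e then 1 else 0) + mdeg E w := by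
  simp only [mdeg, Multiset.filter_cons]
  split <;> simp [Nat.add_comm]

lemma mdeg_eq_zero_iff {E : Multiset (ℕ × ℕ)} {w : ℕ ⊕ ℕ} :
    mdeg E w = 0 ↔ ∀ e ∈ E, ¬ inc w e := by
  simp [mdeg, Multiset.card_eq_zero, Multiset.filter_eq_nil]

lemma exists_inc_of_mdeg_pos {E : Multiset (ℕ × ℕ)} {w : ℕ ⊕ ℕ}
    (h : 0 < mdeg E w) : ∃ e ∈ E, inc w e := by
  obtain ⟨e, he⟩ := Multiset.card_pos_iff_exists_mem.mp h
  exact ⟨e, (Multiset.mem_filter.mp he).1, (Multiset.mem_filter.mp he).2⟩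

lemma one_le_mdeg {E : Multiset (ℕ × ℕ)} {w : ℕ ⊕ ℕ} {e : ℕ × ℕ}
    (he : e ∈ E) (h : inc w e) : 1 ≤ mdeg E w := by
  have h1 : e ∈ E.filter (inc w) := Multiset.mem_filter.mpr ⟨he, h⟩
  have h2 := Multiset.card_pos_iff_exists_mem.mpr ⟨e, h1⟩
  exact h2

lemma inc_endpoints {w : ℕ ⊕ ℕ} {e : ℕ × ℕ} (h : inc w e) :
    w = Sum.inl e.1 ∨ w = Sum.inr e.2 := by
  cases w with
  | inl b => left; simp [inc] at h; rw [h]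
  | inr s => right; simp [inc] at h; rw [h]

lemma two_le_mdeg {e e' : ℕ × ℕ} {E : Multiset (ℕ × ℕ)} {w : ℕ ⊕ ℕ}
    (he : e ∈ E) (he' : e' ∈ E) (hne : e ≠ e') (h1 : inc w e) (h2 : inc w e') :
    2 ≤ mdeg E w := by
  have hle : (e ::ₘ {e'} : Multiset (ℕ × ℕ)) ≤ E.filter (inc w) := by
    rw [Multiset.le_iff_count]
    intro a
    by_cases hae : a = e
    · subst hae
      have h1c := Multiset.one_le_count_iff_mem.mpr (Multiset.mem_filter.mpr ⟨he, h1⟩)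
      simp [Multiset.count_cons, Multiset.count_singleton, hne, Ne.symm hne]
      omega
    · by_cases hae' : a = e'
      · subst hae'
        have h1c := Multiset.one_le_count_iff_mem.mpr (Multiset.mem_filter.mpr ⟨he', h2⟩)
        simp [Multiset.count_cons, Multiset.count_singleton, hae]
        omega
      · simp [Multiset.count_cons, Multiset.count_singleton, hae, hae']
  have h3 := Multiset.card_le_card hle
  simpa [mdeg] using h3

lemma le_of_sum_eq {f : Bool → Multiset (ℕ × ℕ)} {T : Multiset (ℕ × ℕ)}
    (h : f true + f false = T) : ∀ c, f c ≤ T := by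
  intro c
  rw [← h]
  cases c
  · exact Multiset.le_add_left _ _
  · exact Multiset.le_add_right _ _

lemma bool_eq_of_ne_not {a b : Bool} (h : ¬ a = !b) : a = b := by
  cases a <;> cases b <;> simp_all

/-- Compatibility of two constraints. Constraint `(w, c)` means: color class `f c`
must avoid vertex `w`. -/
def compat (E : Multiset (ℕ × ℕ)) (w₁ w₂ : ℕ ⊕ ℕ) (c₁ c₂ : Bool) : Prop :=
  (w₁ = w₂ ∧ c₁ = c₂) ∨ (w₁ ≠ w₂ ∧ (w₁.isLeft ^^ c₁) ≠ (w₂.isLeft ^^ c₂)) ∨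
    mdeg E w₁ = 0 ∨ mdeg E w₂ = 0

lemma split : ∀ (n : ℕ) (E : Multiset (ℕ × ℕ)), Multiset.card E = n →
    (∀ w, mdeg E w ≤ 2) → ∀ (w₁ w₂ : ℕ ⊕ ℕ) (c₁ c₂ : Bool),
    mdeg E w₁ ≤ 1 → mdeg E w₂ ≤ 1 → compat E w₁ w₂ c₁ c₂ →
    ∃ f : Bool → Multiset (ℕ × ℕ), f true + f false = E ∧ (∀ c, PM (f c)) ∧
      (∀ e ∈ f c₁, ¬ inc w₁ e) ∧ (∀ e ∈ f c₂, ¬ inc w₂ e) := by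
  intro n
  induction n using Nat.strong_induction_on with
  | _ n IH =>
  intro E hcard hdeg w₁ w₂ c₁ c₂ h₁ h₂ hc
  -- the peel step: assumes the first constrained vertex has degree exactly 1
  have peel : ∀ (w₁ w₂ : ℕ ⊕ ℕ) (c₁ c₂ : Bool),
      mdeg E w₁ ≤ 1 → mdeg E w₂ ≤ 1 → compat E w₁ w₂ c₁ c₂ → mdeg E w₁ = 1 →
      ∃ f : Bool → Multiset (ℕ × ℕ), f true + f false = E ∧ (∀ c, PM (f c)) ∧
        (∀ e ∈ f c₁, ¬ inc w₁ e) ∧ (∀ e ∈ f c₂, ¬ inc w₂ e) := by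
    clear h₁ h₂ hc w₁ w₂ c₁ c₂
    intro w₁ w₂ c₁ c₂ h₁ h₂ hc hd1
    obtain ⟨e₀, he₀, hinc₀⟩ := exists_inc_of_mdeg_pos (E := E) (w := w₁) (by omega)
    have hEcons : e₀ ::ₘ E.erase e₀ = E := Multiset.cons_erase he₀
    have hcard' : Multiset.card (E.erase e₀) = n - 1 := by
      have h4 := congrArg Multiset.card hEcons
      simp only [Multiset.card_cons] at h4; omega
    have hn1 : n - 1 < n := by
      have h4 := congrArg Multiset.card hEcons
      simp only [Multiset.card_cons] at h4; omega
    have hmdegE' : ∀ w, mdeg E w = (if inc w e₀ then 1 else 0) + mdeg (E.erase e₀) w := by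
      intro w; conv_lhs => rw [← hEcons, mdeg_cons]
    -- the other endpoint of e₀
    obtain ⟨u, hincu, huw₁, hends, hsgnu⟩ : ∃ u, inc u e₀ ∧ u ≠ w₁ ∧
        (∀ w, inc w e₀ → w = w₁ ∨ w = u) ∧ (u.isLeft ^^ !c₁) = (w₁.isLeft ^^ c₁) := by
      rcases inc_endpoints hinc₀ with h | h
      · refine ⟨Sum.inr e₀.2, by simp [inc], by simp [h], ?_, by simp [h]⟩
        intro w hw; rcases inc_endpoints hw with h' | h' <;> simp [h', h]
      · refine ⟨Sum.inl e₀.1, by simp [inc], by simp [h], ?_, by simp [h]⟩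
        intro w hw; rcases inc_endpoints hw with h' | h' <;> simp [h', h]
    have hE'w₁ : mdeg (E.erase e₀) w₁ = 0 := by
      have h4 := hmdegE' w₁; rw [hd1, if_pos hinc₀] at h4; omega
    have hE'u : mdeg (E.erase e₀) u ≤ 1 := by
      have h4 := hmdegE' u; have h2u := hdeg u; rw [if_pos hincu] at h4; omega
    have hdeg' : ∀ w, mdeg (E.erase e₀) w ≤ 2 := by
      intro w; have h3 := hmdegE' w; have h4 := hdeg w; split at h3 <;> omega
    have hE'w₂ : mdeg (E.erase e₀) w₂ ≤ 1 := by
      have h3 := hmdegE' w₂; split at h3 <;> omega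
    -- assembly of the final coloring, given a coloring of `E.erase e₀`
    have assemble : ∀ f : Bool → Multiset (ℕ × ℕ),
        f true + f false = E.erase e₀ → (∀ c, PM (f c)) →
        (∀ e ∈ f (!c₁), ¬ inc u e) →
        ∃ f' : Bool → Multiset (ℕ × ℕ), f' true + f' false = E ∧ (∀ c, PM (f' c)) ∧
          (f' c₁ = f c₁) ∧ (f' (!c₁) = e₀ ::ₘ f (!c₁)) := by
      intro f hsum hpm hav
      refine ⟨fun c => if c = !c₁ then e₀ ::ₘ f c else f c, ?_, ?_, ?_, ?_⟩
      · show (if true = !c₁ then e₀ ::ₘ f true else f true)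
            + (if false = !c₁ then e₀ ::ₘ f false else f false) = E
        cases c₁ <;> simp [Multiset.cons_add, Multiset.add_cons] <;>
          rw [hsum] <;> exact hEcons
      · intro c w
        show mdeg (if c = !c₁ then e₀ ::ₘ f c else f c) w ≤ 1
        by_cases hcc : c = !c₁
        · rw [if_pos hcc, mdeg_cons]
          by_cases hw : inc w e₀
          · rw [if_pos hw]
            rcases hends w hw with hww | hwu
            · have h5 : mdeg (f c) w ≤ mdeg (E.erase e₀) w :=
                mdeg_le (le_of_sum_eq hsum c) w
              rw [hww] at h5
              rw [hww]
              omega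
            · have h5 : mdeg (f c) u = 0 := by
                rw [hcc]; exact mdeg_eq_zero_iff.mpr hav
              rw [hwu]; omega
          · rw [if_neg hw]
            have h5 := hpm c w; omega
        · rw [if_neg hcc]; exact hpm c w
      · cases c₁ <;> simp
      · cases c₁ <;> simp
    by_cases hsame : w₂ = w₁ ∧ c₂ = c₁
    · obtain ⟨f, hsum, hpm, hav, -⟩ :=
        IH (n-1) hn1 (E.erase e₀) hcard' hdeg' u u (!c₁) (!c₁) hE'u hE'u (Or.inl ⟨rfl, rfl⟩)
      obtain ⟨f', hsum', hpm', heq₁, heq₂⟩ := assemble f hsum hpm hav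
      have havw₁ : ∀ e ∈ f' c₁, ¬ inc w₁ e := by
        intro e heF
        rw [heq₁] at heF
        have h6 : e ∈ E.erase e₀ := Multiset.mem_of_le (le_of_sum_eq hsum c₁) heF
        exact mdeg_eq_zero_iff.mp hE'w₁ e h6
      exact ⟨f', hsum', hpm', havw₁, by rw [hsame.1, hsame.2]; exact havw₁⟩
    · -- second constraint is genuinely different; keep it in the recursion
      have hcompat' : compat (E.erase e₀) u w₂ (!c₁) c₂ := by
        rcases hc with ⟨h, h'⟩ | ⟨hne, hsgn⟩ | h0 | h0
        · exact absurd ⟨h.symm, h'.symm⟩ hsame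
        · by_cases huw₂ : u = w₂
          · right; right; left
            have h7 : 1 ≤ mdeg E w₂ := one_le_mdeg he₀ (huw₂ ▸ hincu)
            have h3 := hmdegE' w₂; rw [if_pos (huw₂ ▸ hincu)] at h3
            rw [huw₂]; omega
          · right; left; exact ⟨huw₂, by rw [hsgnu]; exact hsgn⟩
        · omega
        · right; right; right
          have h3 := hmdegE' w₂; split at h3 <;> omega
      obtain ⟨f, hsum, hpm, hav, hav₂⟩ :=
        IH (n-1) hn1 (E.erase e₀) hcard' hdeg' u w₂ (!c₁) c₂ hE'u hE'w₂ hcompat'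
      obtain ⟨f', hsum', hpm', heq₁, heq₂⟩ := assemble f hsum hpm hav
      have havw₁ : ∀ e ∈ f' c₁, ¬ inc w₁ e := by
        intro e heF
        rw [heq₁] at heF
        have h6 : e ∈ E.erase e₀ := Multiset.mem_of_le (le_of_sum_eq hsum c₁) heF
        exact mdeg_eq_zero_iff.mp hE'w₁ e h6
      refine ⟨f', hsum', hpm', havw₁, ?_⟩
      intro e heF
      by_cases hcc : c₂ = !c₁
      · rw [hcc, heq₂] at heF
        rcases Multiset.mem_cons.mp heF with rfl | heF'
        · -- show ¬ inc w₂ e₀ (here e = e₀)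
          intro hw₂e₀
          rcases hends w₂ hw₂e₀ with hww | hwu
          · rcases hc with ⟨h, h'⟩ | ⟨hne, hsgn⟩ | h0 | h0
            · exact hsame ⟨h.symm, h'.symm⟩
            · exact hne hww.symm
            · omega
            · have h8 := one_le_mdeg he₀ hw₂e₀; omega
          · rcases hc with ⟨h, h'⟩ | ⟨hne, hsgn⟩ | h0 | h0
            · exact hsame ⟨h.symm, h'.symm⟩
            · exact hsgn (by rw [← hsgnu, hwu, hcc])
            · omega
            · have h8 := one_le_mdeg he₀ hw₂e₀; omega
        · exact hav₂ e (by rwa [hcc])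
      · have hcc' : c₂ = c₁ := bool_eq_of_ne_not hcc
        rw [hcc', heq₁] at heF
        exact hav₂ e (by rwa [← hcc'] at heF)
  by_cases d1 : mdeg E w₁ = 1
  · exact peel w₁ w₂ c₁ c₂ h₁ h₂ hc d1
  by_cases d2 : mdeg E w₂ = 1
  · have hc' : compat E w₂ w₁ c₂ c₁ := by
      rcases hc with ⟨h, h'⟩ | ⟨h, h'⟩ | h | h
      · exact Or.inl ⟨h.symm, h'.symm⟩
      · exact Or.inr (Or.inl ⟨Ne.symm h, Ne.symm h'⟩)
      · exact Or.inr (Or.inr (Or.inr h))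
      · exact Or.inr (Or.inr (Or.inl h))
    obtain ⟨f, hsum, hpm, a₂, a₁⟩ := peel w₂ w₁ c₂ c₁ h₂ h₁ hc' d2
    exact ⟨f, hsum, hpm, a₁, a₂⟩
  -- both constrained vertices have degree 0
  have hz₁ : mdeg E w₁ = 0 := by omega
  have hz₂ : mdeg E w₂ = 0 := by omega
  by_cases hE0 : E = 0
  · subst hE0
    exact ⟨fun _ => 0, by simp, fun c w => by simp [mdeg], by simp, by simp⟩
  obtain ⟨e₀, he₀⟩ := Multiset.exists_mem_of_ne_zero hE0
  have hEcons : e₀ ::ₘ E.erase e₀ = E := Multiset.cons_erase he₀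
  have hcard' : Multiset.card (E.erase e₀) = n - 1 := by
    have h4 := congrArg Multiset.card hEcons
    simp only [Multiset.card_cons] at h4; omega
  have hn1 : n - 1 < n := by
    have h4 := congrArg Multiset.card hEcons
    simp only [Multiset.card_cons] at h4; omega
  have hmdegE' : ∀ w, mdeg E w = (if inc w e₀ then 1 else 0) + mdeg (E.erase e₀) w := by
    intro w; conv_lhs => rw [← hEcons, mdeg_cons]
  have hdeg' : ∀ w, mdeg (E.erase e₀) w ≤ 2 := by
    intro w; have h3 := hmdegE' w; have h4 := hdeg w; split at h3 <;> omega
  have hbl : mdeg (E.erase e₀) (Sum.inl e₀.1) ≤ 1 := by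
    have h3 := hmdegE' (Sum.inl e₀.1)
    rw [if_pos (by simp [inc])] at h3
    have h4 := hdeg (Sum.inl e₀.1); omega
  have hbr : mdeg (E.erase e₀) (Sum.inr e₀.2) ≤ 1 := by
    have h3 := hmdegE' (Sum.inr e₀.2)
    rw [if_pos (by simp [inc])] at h3
    have h4 := hdeg (Sum.inr e₀.2); omega
  obtain ⟨f, hsum, hpm, havl, havr⟩ :=
    IH (n-1) hn1 (E.erase e₀) hcard' hdeg' (Sum.inl e₀.1) (Sum.inr e₀.2) false false
      hbl hbr (Or.inr (Or.inl ⟨by simp, by simp⟩))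
  have hf'le : ∀ c, (if c = false then e₀ ::ₘ f c else f c) ≤ E := by
    intro c
    by_cases hcc : c = false
    · rw [if_pos hcc, ← hEcons]
      exact Multiset.cons_le_cons _ (le_of_sum_eq hsum c)
    · rw [if_neg hcc]
      exact le_trans (le_of_sum_eq hsum c) (Multiset.erase_le _ _)
  refine ⟨fun c => if c = false then e₀ ::ₘ f c else f c, ?_, ?_, ?_, ?_⟩
  · show (if true = false then e₀ ::ₘ f true else f true)
        + (if false = false then e₀ ::ₘ f false else f false) = E
    rw [if_neg (by simp : ¬ (true = false)), if_pos rfl, Multiset.add_cons, hsum]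
    exact hEcons
  · intro c w
    show mdeg (if c = false then e₀ ::ₘ f c else f c) w ≤ 1
    by_cases hcc : c = false
    · rw [if_pos hcc, mdeg_cons]
      by_cases hw : inc w e₀
      · rw [if_pos hw]
        rcases inc_endpoints hw with hww | hww
        · have h5 : mdeg (f c) w = 0 :=
            mdeg_eq_zero_iff.mpr (fun e he => by rw [hww]; rw [hcc] at he; exact havl e he)
          omega
        · have h5 : mdeg (f c) w = 0 :=
            mdeg_eq_zero_iff.mpr (fun e he => by rw [hww]; rw [hcc] at he; exact havr e he)
          omega
      · rw [if_neg hw]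
        have h5 := hpm c w; omega
    · rw [if_neg hcc]; exact hpm c w
  · intro e heF
    exact mdeg_eq_zero_iff.mp hz₁ e (Multiset.mem_of_le (hf'le c₁) heF)
  · intro e heF
    exact mdeg_eq_zero_iff.mp hz₂ e (Multiset.mem_of_le (hf'le c₂) heF)

end MCP

section App

variable {B S : Finset ℕ} {g : ℕ → ℕ → Prop} {v : ℕ → ℕ → ℝ}

/-- The set of achievable matching values. -/
def WSet (B S : Finset ℕ) (g : ℕ → ℕ → Prop) (v : ℕ → ℕ → ℝ) : Set ℝ :=
  {x | ∃ M : Finset (ℕ × ℕ), IsMatching B S g M ∧ x = ∑ e ∈ M, v e.1 e.2}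

lemma IsMatching.empty : IsMatching B S g ∅ := by
  constructor <;> intro e he <;> simp at he

lemma zero_mem_WSet : (0 : ℝ) ∈ WSet B S g v :=
  ⟨∅, IsMatching.empty, by simp⟩

lemma WSet_finite : (WSet B S g v).Finite := by
  apply Set.Finite.subset
    (Set.Finite.image (fun M : Finset (ℕ × ℕ) => ∑ e ∈ M, v e.1 e.2)
      ((B ×ˢ S).powerset.finite_toSet))
  rintro x ⟨M, hM, rfl⟩
  refine ⟨M, ?_, rfl⟩
  simp only [Finset.coe_powerset, Set.mem_preimage, Set.mem_powerset_iff, Finset.coe_subset,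
    Finset.mem_coe, Finset.mem_powerset]
  intro e he
  obtain ⟨h1, h2, _⟩ := hM.1 e he
  exact Finset.mem_product.mpr ⟨h1, h2⟩

lemma W_eq_sSup : W B S g v = sSup (WSet B S g v) := rfl

lemma le_W {M : Finset (ℕ × ℕ)} (hM : IsMatching B S g M) :
    ∑ e ∈ M, v e.1 e.2 ≤ W B S g v :=
  le_csSup (WSet_finite.bddAbove) ⟨M, hM, rfl⟩

lemma W_mem : W B S g v ∈ WSet B S g v :=
  Set.Nonempty.csSup_mem ⟨0, zero_mem_WSet⟩ WSet_finite

lemma W_spec : ∃ M : Finset (ℕ × ℕ), IsMatching B S g M ∧ W B S g v = ∑ e ∈ M, v e.1 e.2 :=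
  W_mem

lemma IsMatching.mono {S' : Finset ℕ} (hS' : S' ⊆ S) {M : Finset (ℕ × ℕ)}
    (hM : IsMatching B S' g M) : IsMatching B S g M :=
  ⟨fun e he => ⟨(hM.1 e he).1, hS' (hM.1 e he).2.1, (hM.1 e he).2.2⟩, hM.2⟩

lemma W_erase_le (j : ℕ) : W B (S.erase j) g v ≤ W B S g v := by
  obtain ⟨M, hM, hval⟩ := W_spec (B := B) (S := S.erase j) (g := g) (v := v)
  rw [hval]
  exact le_W (hM.mono (Finset.erase_subset _ _))

lemma util_matched {p : ℕ → ℝ} {a : Finset (ℕ × ℕ)}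
    (hM : ∀ e ∈ a, ∀ e' ∈ a, e ≠ e' → e.1 ≠ e'.1 ∧ e.2 ≠ e'.2) {i j₀ : ℕ}
    (hij : (i, j₀) ∈ a) : util v p a i = v i j₀ - p j₀ := by
  have hfil : a.filter (fun e => e.1 = i) = {(i, j₀)} := by
    ext e
    simp only [Finset.mem_filter, Finset.mem_singleton]
    constructor
    · rintro ⟨he, h1⟩
      by_contra hne
      exact (hM e he _ hij hne).1 h1
    · rintro rfl
      exact ⟨hij, rfl⟩
  rw [util, hfil, Finset.sum_singleton]

lemma util_unmatched {p : ℕ → ℝ} {a : Finset (ℕ × ℕ)} {i : ℕ}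
    (h : ∀ j, (i, j) ∉ a) : util v p a i = 0 := by
  have hfil : a.filter (fun e => e.1 = i) = ∅ := by
    ext e
    simp only [Finset.mem_filter, Finset.notMem_empty, iff_false, not_and]
    intro he h1
    exact absurd (show (i, e.2) ∈ a by rw [← h1]; exact he) (h e.2)
  rw [util, hfil, Finset.sum_empty]

lemma CE_value {p : ℕ → ℝ} {a : Finset (ℕ × ℕ)} (hce : IsCE B S g v p a) :
    ∑ e ∈ a, v e.1 e.2 = (∑ i ∈ B, util v p a i) + ∑ j ∈ S, p j := by
  obtain ⟨hm, hp, hu0, henv, h0⟩ := hce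
  have h1 : ∑ i ∈ B, util v p a i = ∑ e ∈ a, (v e.1 e.2 - p e.2) := by
    simp only [util]
    exact Finset.sum_fiberwise_of_maps_to (fun e he => (hm.1 e he).1) _
  have hinj : ∀ x ∈ a, ∀ y ∈ a, x.2 = y.2 → x = y := by
    intro x hx y hy hxy
    by_contra hne
    exact (hm.2 x hx y hy hne).2 hxy
  have h2 : ∑ j ∈ a.image Prod.snd, p j = ∑ e ∈ a, p e.2 := Finset.sum_image hinj
  have h3 : ∑ j ∈ a.image Prod.snd, p j = ∑ j ∈ S, p j := by
    apply Finset.sum_subset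
    · intro j hj
      obtain ⟨e, he, rfl⟩ := Finset.mem_image.mp hj
      exact (hm.1 e he).2.1
    · intro j hjS hj
      exact h0 j hjS (fun i hij => hj (Finset.mem_image.mpr ⟨(i, j), hij, rfl⟩))
  rw [h1, ← h3, h2, ← Finset.sum_add_distrib]
  apply Finset.sum_congr rfl
  intro e _
  ring

lemma matching_le_CE {p : ℕ → ℝ} {a : Finset (ℕ × ℕ)} (hce : IsCE B S g v p a)
    {S' : Finset ℕ} (hS' : S' ⊆ S) {M : Finset (ℕ × ℕ)} (hM : IsMatching B S' g M) :
    ∑ e ∈ M, v e.1 e.2 ≤ (∑ i ∈ B, util v p a i) + ∑ j ∈ S', p j := by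
  obtain ⟨hm, hp, hu0, henv, h0⟩ := hce
  have hsplit : ∑ e ∈ M, v e.1 e.2
      = ∑ e ∈ M, (v e.1 e.2 - p e.2) + ∑ e ∈ M, p e.2 := by
    rw [← Finset.sum_add_distrib]
    apply Finset.sum_congr rfl
    intro e _
    ring
  have hinjf : ∀ x ∈ M, ∀ y ∈ M, x.1 = y.1 → x = y := by
    intro x hx y hy hxy
    by_contra hne
    exact (hM.2 x hx y hy hne).1 hxy
  have hinjs : ∀ x ∈ M, ∀ y ∈ M, x.2 = y.2 → x = y := by
    intro x hx y hy hxy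
    by_contra hne
    exact (hM.2 x hx y hy hne).2 hxy
  have hb1 : ∑ e ∈ M, (v e.1 e.2 - p e.2) ≤ ∑ i ∈ B, util v p a i := by
    calc ∑ e ∈ M, (v e.1 e.2 - p e.2) ≤ ∑ e ∈ M, util v p a e.1 := by
          apply Finset.sum_le_sum
          intro e he
          obtain ⟨hi, hj, hg⟩ := hM.1 e he
          exact henv e.1 hi e.2 (hS' hj) hg
      _ = ∑ i ∈ M.image Prod.fst, util v p a i := (Finset.sum_image hinjf).symm
      _ ≤ ∑ i ∈ B, util v p a i := by
          apply Finset.sum_le_sum_of_subset_of_nonneg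
          · intro i hi
            obtain ⟨e, he, rfl⟩ := Finset.mem_image.mp hi
            exact (hM.1 e he).1
          · intro i hi _
            exact hu0 i hi
  have hb2 : ∑ e ∈ M, p e.2 ≤ ∑ j ∈ S', p j := by
    calc ∑ e ∈ M, p e.2 = ∑ j ∈ M.image Prod.snd, p j := (Finset.sum_image hinjs).symm
      _ ≤ ∑ j ∈ S', p j := by
          apply Finset.sum_le_sum_of_subset_of_nonneg
          · intro j hj
            obtain ⟨e, he, rfl⟩ := Finset.mem_image.mp hj
            exact (hM.1 e he).2.1
          · intro j _ _
            exact hp j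
  rw [hsplit]
  linarith

/-- Any competitive price is at most the seller's marginal contribution. -/
lemma price_le_marginal {p : ℕ → ℝ} {a : Finset (ℕ × ℕ)} (hce : IsCE B S g v p a)
    {j : ℕ} (hj : j ∈ S) : p j ≤ W B S g v - W B (S.erase j) g v := by
  obtain ⟨M', hM', hval'⟩ := W_spec (B := B) (S := S.erase j) (g := g) (v := v)
  have hb := matching_le_CE hce (Finset.erase_subset _ _) hM'
  have hsum : p j + ∑ j' ∈ S.erase j, p j' = ∑ j' ∈ S, p j' :=
    Finset.add_sum_erase S p hj
  have hvalue := CE_value hce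
  have hle : ∑ e ∈ a, v e.1 e.2 ≤ W B S g v := le_W hce.1
  rw [← hval'] at hb
  linarith

end App

section Bridge

open MCP

variable {B S : Finset ℕ} {g : ℕ → ℕ → Prop} {v : ℕ → ℕ → ℝ}

lemma mdeg_add (A C : Multiset (ℕ × ℕ)) (w : ℕ ⊕ ℕ) :
    mdeg (A + C) w = mdeg A w + mdeg C w := by
  simp [mdeg, Multiset.filter_add]

lemma matching_mdeg {M : Finset (ℕ × ℕ)} (hM : IsMatching B S g M) (w : ℕ ⊕ ℕ) :
    mdeg M.1 w ≤ 1 := by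
  by_contra hlt
  push_neg at hlt
  have h2 : 1 < (⟨M.1.filter (inc w), M.nodup.filter _⟩ : Finset (ℕ × ℕ)).card := by
    simpa [Finset.card, mdeg] using hlt
  obtain ⟨a, ha, b, hb, hab⟩ := Finset.one_lt_card.mp h2
  rw [Finset.mem_mk, Multiset.mem_filter] at ha hb
  have hd := hM.2 a ha.1 b hb.1 hab
  cases w with
  | inl x =>
    have h3 : a.1 = x := ha.2
    have h4 : b.1 = x := hb.2
    exact hd.1 (h3.trans h4.symm)
  | inr x =>
    have h3 : a.2 = x := ha.2
    have h4 : b.2 = x := hb.2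
    exact hd.2 (h3.trans h4.symm)

lemma nodup_of_PM {X : Multiset (ℕ × ℕ)} (h : PM X) : X.Nodup := by
  rw [Multiset.nodup_iff_count_le_one]
  intro e
  calc Multiset.count e X = Multiset.card (X.filter (fun x => e = x)) :=
        Multiset.count_eq_card_filter_eq X e
    _ ≤ Multiset.card (X.filter (inc (Sum.inl e.1))) :=
        Multiset.card_le_card (Multiset.monotone_filter_right X
          (fun x hx => show x.1 = e.1 by rw [← hx]))
    _ ≤ 1 := h _

lemma color_matching {X : Multiset (ℕ × ℕ)} (hpm : PM X)
    (hsupport : ∀ e ∈ X, e.1 ∈ B ∧ e.2 ∈ S ∧ g e.1 e.2) :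
    ∃ N : Finset (ℕ × ℕ), IsMatching B S g N ∧
      (X.map (fun e => v e.1 e.2)).sum = ∑ e ∈ N, v e.1 e.2 := by
  refine ⟨⟨X, nodup_of_PM hpm⟩, ⟨?_, ?_⟩, rfl⟩
  · intro e he
    exact hsupport e (Finset.mem_mk.mp he)
  · intro e he e' he' hne
    rw [Finset.mem_mk] at he he'
    constructor
    · intro h1
      have h5 := two_le_mdeg he he' hne (show inc (Sum.inl e.1) e from rfl)
        (show inc (Sum.inl e.1) e' from h1.symm)
      have h6 := hpm (Sum.inl e.1)
      omega
    · intro h2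
      have h5 := two_le_mdeg he he' hne (show inc (Sum.inr e.2) e from rfl)
        (show inc (Sum.inr e.2) e' from h2.symm)
      have h6 := hpm (Sum.inr e.2)
      omega

lemma split_pm (E : Multiset (ℕ × ℕ)) (hdeg : ∀ w, mdeg E w ≤ 2) :
    ∃ X Y : Multiset (ℕ × ℕ), X + Y = E ∧ PM X ∧ PM Y := by
  have hz : mdeg E (Sum.inl ((E.map Prod.fst).sum + 1)) = 0 := by
    rw [mdeg_eq_zero_iff]
    intro e he hincb
    have h1 : e.1 ∈ E.map Prod.fst := Multiset.mem_map_of_mem _ he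
    have h2 := Multiset.single_le_sum (fun x _ => Nat.zero_le x) _ h1
    have h3 : e.1 = (E.map Prod.fst).sum + 1 := hincb
    omega
  obtain ⟨f, hsum, hpm, -, -⟩ := split (Multiset.card E) E rfl hdeg
    (Sum.inl ((E.map Prod.fst).sum + 1)) (Sum.inl ((E.map Prod.fst).sum + 1))
    true true (by omega) (by omega) (Or.inl ⟨rfl, rfl⟩)
  exact ⟨f true, f false, hsum, hpm true, hpm false⟩

lemma split_pm_avoid (E : Multiset (ℕ × ℕ)) (hdeg : ∀ w, mdeg E w ≤ 2) (j₀ : ℕ)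
    (hj₀ : mdeg E (Sum.inr j₀) ≤ 1) :
    ∃ X Y : Multiset (ℕ × ℕ), X + Y = E ∧ PM X ∧ PM Y ∧ ∀ e ∈ Y, e.2 ≠ j₀ := by
  obtain ⟨f, hsum, hpm, hav, -⟩ := split (Multiset.card E) E rfl hdeg
    (Sum.inr j₀) (Sum.inr j₀) false false hj₀ hj₀ (Or.inl ⟨rfl, rfl⟩)
  exact ⟨f true, f false, hsum, hpm true, hpm false, fun e he => hav e he⟩

lemma IsMatching.subset {M N : Finset (ℕ × ℕ)} (h : N ⊆ M) (hM : IsMatching B S g M) :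
    IsMatching B S g N :=
  ⟨fun e he => hM.1 e (h he), fun e he e' he' => hM.2 e (h he) e' (h he')⟩

lemma key_unmatched {i j : ℕ} (hi : i ∈ B) (hj : j ∈ S) (hg : g i j)
    {M : Finset (ℕ × ℕ)} (hM : IsMatching B S g M) (hiM : ∀ j', (i, j') ∉ M) :
    v i j + W B (S.erase j) g v + ∑ e ∈ M, v e.1 e.2 ≤ W B S g v + W B S g v := by
  obtain ⟨K, hK, hKval⟩ := W_spec (B := B) (S := S.erase j) (g := g) (v := v)
  have hMi : mdeg M.1 (Sum.inl i) = 0 := by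
    rw [mdeg_eq_zero_iff]
    intro e he hinc
    have h3 : e.1 = i := hinc
    have he' : (i, e.2) = e := by rw [← h3]
    exact hiM e.2 (he' ▸ he)
  have hKj : mdeg K.1 (Sum.inr j) = 0 := by
    rw [mdeg_eq_zero_iff]
    intro e he hinc
    exact Finset.ne_of_mem_erase ((hK.1 e he).2.1) hinc
  have hdegE : ∀ w, mdeg ((i, j) ::ₘ (K.1 + M.1)) w ≤ 2 := by
    intro w
    rw [mdeg_cons, mdeg_add]
    have h1 := matching_mdeg hK w
    have h2 := matching_mdeg hM w
    by_cases hw : inc w (i, j)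
    · rw [if_pos hw]
      rcases inc_endpoints hw with rfl | rfl
      · have hMi' : mdeg M.1 (Sum.inl (i, j).1) = 0 := hMi
        omega
      · have hKj' : mdeg K.1 (Sum.inr (i, j).2) = 0 := hKj
        omega
    · rw [if_neg hw]; omega
  obtain ⟨X, Y, hsum, hX, hY⟩ := split_pm _ hdegE
  have hsupport : ∀ e ∈ (i, j) ::ₘ (K.1 + M.1), e.1 ∈ B ∧ e.2 ∈ S ∧ g e.1 e.2 := by
    intro e he
    rw [Multiset.mem_cons] at he
    rcases he with rfl | he
    · exact ⟨hi, hj, hg⟩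
    · rcases Multiset.mem_add.mp he with he | he
      · exact (hK.mono (Finset.erase_subset _ _)).1 e he
      · exact hM.1 e he
  have hXle : X ≤ (i, j) ::ₘ (K.1 + M.1) := hsum ▸ Multiset.le_add_right _ _
  have hYle : Y ≤ (i, j) ::ₘ (K.1 + M.1) := hsum ▸ Multiset.le_add_left _ _
  obtain ⟨NX, hNX, hNXval⟩ := color_matching (v := v) hX
    (fun e he => hsupport e (Multiset.mem_of_le hXle he))
  obtain ⟨NY, hNY, hNYval⟩ := color_matching (v := v) hY
    (fun e he => hsupport e (Multiset.mem_of_le hYle he))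
  have hEC : (((i, j) ::ₘ (K.1 + M.1)).map (fun e => v e.1 e.2)).sum
      = v i j + ((∑ e ∈ K, v e.1 e.2) + ∑ e ∈ M, v e.1 e.2) := by
    rw [Multiset.map_cons, Multiset.sum_cons, Multiset.map_add, Multiset.sum_add]; rfl
  have hXY : (X.map (fun e => v e.1 e.2)).sum + (Y.map (fun e => v e.1 e.2)).sum
      = (((i, j) ::ₘ (K.1 + M.1)).map (fun e => v e.1 e.2)).sum := by
    rw [← hsum]
    simp [Multiset.map_add]
  have hWX := le_W (v := v) hNX
  have hWY := le_W (v := v) hNY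
  rw [← hNXval] at hWX
  rw [← hNYval] at hWY
  rw [hEC] at hXY
  rw [hKval]
  linarith

lemma key_matched {i j j₀ : ℕ} (hi : i ∈ B) (hj : j ∈ S) (hg : g i j)
    {M : Finset (ℕ × ℕ)} (hM : IsMatching B S g M) (hij₀ : (i, j₀) ∈ M)
    (hjj₀ : j ≠ j₀) :
    v i j + W B (S.erase j) g v + (∑ e ∈ M, v e.1 e.2 - v i j₀)
      ≤ W B S g v + W B (S.erase j₀) g v := by
  obtain ⟨K, hK, hKval⟩ := W_spec (B := B) (S := S.erase j) (g := g) (v := v)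
  have hM' : IsMatching B S g (M.erase (i, j₀)) :=
    IsMatching.subset (Finset.erase_subset _ _) hM
  have hMi : mdeg (M.erase (i, j₀)).1 (Sum.inl i) = 0 := by
    rw [mdeg_eq_zero_iff]
    intro e he hinc
    have h3 : e.1 = i := hinc
    have hme := Finset.mem_of_mem_erase he
    have hne := Finset.ne_of_mem_erase he
    exact (hM.2 e hme _ hij₀ hne).1 h3
  have hMj₀ : mdeg (M.erase (i, j₀)).1 (Sum.inr j₀) = 0 := by
    rw [mdeg_eq_zero_iff]
    intro e he hinc
    have h3 : e.2 = j₀ := hinc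
    have hme := Finset.mem_of_mem_erase he
    have hne := Finset.ne_of_mem_erase he
    exact (hM.2 e hme _ hij₀ hne).2 h3
  have hKj : mdeg K.1 (Sum.inr j) = 0 := by
    rw [mdeg_eq_zero_iff]
    intro e he hinc
    exact Finset.ne_of_mem_erase ((hK.1 e he).2.1) hinc
  have hdegE : ∀ w, mdeg ((i, j) ::ₘ (K.1 + (M.erase (i, j₀)).1)) w ≤ 2 := by
    intro w
    rw [mdeg_cons, mdeg_add]
    have h1 := matching_mdeg hK w
    have h2 := matching_mdeg hM' w
    by_cases hw : inc w (i, j)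
    · rw [if_pos hw]
      rcases inc_endpoints hw with rfl | rfl
      · have hMi' : mdeg (M.erase (i, j₀)).1 (Sum.inl (i, j).1) = 0 := hMi
        omega
      · have hKj' : mdeg K.1 (Sum.inr (i, j).2) = 0 := hKj
        omega
    · rw [if_neg hw]; omega
  have hdegj₀ : mdeg ((i, j) ::ₘ (K.1 + (M.erase (i, j₀)).1)) (Sum.inr j₀) ≤ 1 := by
    rw [mdeg_cons, mdeg_add]
    rw [if_neg (show ¬ inc (Sum.inr j₀) (i, j) from hjj₀)]
    have h1 := matching_mdeg hK (Sum.inr j₀)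
    omega
  obtain ⟨X, Y, hsum, hX, hY, hYav⟩ := split_pm_avoid _ hdegE j₀ hdegj₀
  have hsupport : ∀ e ∈ (i, j) ::ₘ (K.1 + (M.erase (i, j₀)).1),
      e.1 ∈ B ∧ e.2 ∈ S ∧ g e.1 e.2 := by
    intro e he
    rw [Multiset.mem_cons] at he
    rcases he with rfl | he
    · exact ⟨hi, hj, hg⟩
    · rcases Multiset.mem_add.mp he with he | he
      · exact (hK.mono (Finset.erase_subset _ _)).1 e he
      · exact hM'.1 e he
  have hXle : X ≤ (i, j) ::ₘ (K.1 + (M.erase (i, j₀)).1) := hsum ▸ Multiset.le_add_right _ _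
  have hYle : Y ≤ (i, j) ::ₘ (K.1 + (M.erase (i, j₀)).1) := hsum ▸ Multiset.le_add_left _ _
  obtain ⟨NX, hNX, hNXval⟩ := color_matching (v := v) hX
    (fun e he => hsupport e (Multiset.mem_of_le hXle he))
  obtain ⟨NY, hNY, hNYval⟩ := color_matching (B := B) (S := S.erase j₀) (g := g) (v := v) hY
    (fun e he => by
      obtain ⟨h1, h2, h3⟩ := hsupport e (Multiset.mem_of_le hYle he)
      exact ⟨h1, Finset.mem_erase.mpr ⟨hYav e he, h2⟩, h3⟩)
  have hEC : (((i, j) ::ₘ (K.1 + (M.erase (i, j₀)).1)).map (fun e => v e.1 e.2)).sum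
      = v i j + ((∑ e ∈ K, v e.1 e.2) + ∑ e ∈ M.erase (i, j₀), v e.1 e.2) := by
    rw [Multiset.map_cons, Multiset.sum_cons, Multiset.map_add, Multiset.sum_add]; rfl
  have hXY : (X.map (fun e => v e.1 e.2)).sum + (Y.map (fun e => v e.1 e.2)).sum
      = (((i, j) ::ₘ (K.1 + (M.erase (i, j₀)).1)).map (fun e => v e.1 e.2)).sum := by
    rw [← hsum]
    simp [Multiset.map_add]
  have hWX := le_W (v := v) hNX
  have hWY := le_W (v := v) hNY
  rw [← hNXval] at hWX
  rw [← hNYval] at hWY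
  rw [hEC] at hXY
  have herase : ∑ e ∈ M.erase (i, j₀), v e.1 e.2
      = ∑ e ∈ M, v e.1 e.2 - v i j₀ := Finset.sum_erase_eq_sub hij₀
  rw [hKval]
  rw [herase] at hXY
  linarith

end Bridge

/-- Characterization of the maximum competitive price: the maximum competitive price of
seller `j`'s item equals `j`'s marginal contribution to the optimal welfare,
`p̄ j = W(S, B, G) − W(S \ {j}, B, G)`. -/
theorem max_competitive_price_eq_marginal (B S : Finset ℕ) (g : ℕ → ℕ → Prop)
    (v : ℕ → ℕ → ℝ) (hv : ∀ i j, 0 ≤ v i j)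
    (pbar : ℕ → ℝ) (abar : Finset (ℕ × ℕ)) (hce : IsCE B S g v pbar abar)
    (hmax : ∀ p a, IsCE B S g v p a → ∀ j ∈ S, p j ≤ pbar j) :
    ∀ j ∈ S, pbar j = W B S g v - W B (S.erase j) g v := by
  intro j hj
  obtain ⟨Mopt, hMopt, hWval⟩ := W_spec (B := B) (S := S) (g := g) (v := v)
  have hMerase : ∀ {i j₀ : ℕ}, (i, j₀) ∈ Mopt →
      IsMatching B (S.erase j₀) g (Mopt.erase (i, j₀)) := by
    intro i j₀ hij
    constructor
    · intro e he
      have hme := Finset.mem_of_mem_erase he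
      have hne := Finset.ne_of_mem_erase he
      obtain ⟨h1, h2, h3⟩ := hMopt.1 e hme
      exact ⟨h1, Finset.mem_erase.mpr ⟨(hMopt.2 e hme _ hij hne).2, h2⟩, h3⟩
    · intro e he e' he'
      exact hMopt.2 e (Finset.mem_of_mem_erase he) e' (Finset.mem_of_mem_erase he')
  set q : ℕ → ℝ := fun j' => if j' ∈ S then W B S g v - W B (S.erase j') g v else 0 with hq
  have hqdef : ∀ j', q j' = if j' ∈ S then W B S g v - W B (S.erase j') g v else 0 :=
    fun _ => rfl
  have hq0 : ∀ j', 0 ≤ q j' := by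
    intro j'
    rw [hqdef]
    split
    · have h1 := W_erase_le (B := B) (S := S) (g := g) (v := v) j'
      linarith
    · exact le_refl 0
  have hWerase_ge : ∀ {i j₀ : ℕ}, (i, j₀) ∈ Mopt →
      W B S g v - v i j₀ ≤ W B (S.erase j₀) g v := by
    intro i j₀ hij
    have hle := le_W (g := g) (v := v) (hMerase hij)
    rw [Finset.sum_erase_eq_sub hij] at hle
    rw [hWval]
    linarith
  have hceq : IsCE B S g v q Mopt := by
    refine ⟨hMopt, hq0, ?_, ?_, ?_⟩
    · intro i hi
      by_cases hm : ∃ j₀, (i, j₀) ∈ Mopt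
      · obtain ⟨j₀, hij⟩ := hm
        rw [util_matched hMopt.2 hij]
        have hj₀S : j₀ ∈ S := (hMopt.1 _ hij).2.1
        rw [hqdef, if_pos hj₀S]
        have h1 := hWerase_ge hij
        linarith
      · push_neg at hm
        rw [util_unmatched hm]
    · intro i hi j' hj' hgij
      have hqj' : q j' = W B S g v - W B (S.erase j') g v := by
        rw [hqdef, if_pos hj']
      by_cases hm : ∃ j₀, (i, j₀) ∈ Mopt
      · obtain ⟨j₀, hij⟩ := hm
        rw [util_matched hMopt.2 hij]
        have hj₀S : j₀ ∈ S := (hMopt.1 _ hij).2.1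
        have hqj₀ : q j₀ = W B S g v - W B (S.erase j₀) g v := by
          rw [hqdef, if_pos hj₀S]
        by_cases hjj : j' = j₀
        · rw [hjj]
        · have hk := key_matched (v := v) hi hj' hgij hMopt hij hjj
          rw [← hWval] at hk
          rw [hqj', hqj₀]
          linarith
      · push_neg at hm
        rw [util_unmatched hm, hqj']
        have hk := key_unmatched (v := v) hi hj' hgij hMopt hm
        rw [← hWval] at hk
        linarith
    · intro j' hj' hun
      have hm : IsMatching B (S.erase j') g Mopt := by
        constructor
        · intro e he
          obtain ⟨h1, h2, h3⟩ := hMopt.1 e he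
          refine ⟨h1, Finset.mem_erase.mpr ⟨?_, h2⟩, h3⟩
          intro heq
          have hpe : (e.1, j') = e := by rw [← heq]
          exact hun e.1 (hpe ▸ he)
        · exact hMopt.2
      have h1 := le_W (g := g) (v := v) hm
      have h2 := W_erase_le (B := B) (S := S) (g := g) (v := v) j'
      rw [hqdef, if_pos hj']
      rw [← hWval] at h1
      linarith
  have hle1 := price_le_marginal hce hj
  have hle2 := hmax q Mopt hceq j hj
  have hqj : q j = W B S g v - W B (S.erase j) g v := by rw [hqdef, if_pos hj]
  rw [hqj] at hle2
  linarith
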